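/- Let 1 ≤ k ≤ n−1, let A₀ be a real symmetric positive definite 2k×2k matrix, and let A₁ be a real symmetric invertible 2(n−k)×2(n−k) matrix satisfying ⟨A₁(c,0),(c,0)⟩ = 0 for all c ∈ ℝ^{n−k}. Define H₀(x) := ½⟨A₀x,x⟩ − 1 on ℝ^{2k} and H(x,y) := H₀(x) + ½⟨A₁y,y⟩ on ℝ^{2k} × ℝ^{2(n−k)}, with Hamiltonian vector fields X_{H₀}(x) = 𝕁_k A₀ x and X_H(x,y) = (𝕁_k A₀ x, 𝕁_{n−k} A₁ y). Let J₀ and J be smooth families of matrices (on ℝ^{2k} × ℝ × ℝ and on (ℝ^{2k}×ℝ^{2(n−k)}) × ℝ × ℝ respectively, 1-periodic in the last variable) with square −I and compatible with ω_k and with ω_k ⊕ ω_{n−k} respectively (i.e., ω(ξ, Jξ) > 0 for ξ ≠ 0). Suppose (v₀, η₀), defined for s ≤ 0, and (v, η), defined for s ≥ 0, are smooth solutions of the Rabinowitz Floer equations ∂_s v₀ = −J₀(v₀,η₀,t)[∂_t v₀ − η₀ X_{H₀}(v₀)], η₀'(s) = −∫₀¹ H₀(v₀(s,t)) dt, and ∂_s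 v = −J(v,η,t)[∂_t v − η X_H(v)], η'(s) = −∫₀¹ H(v(s,t)) dt, with v₀(s,·), v(s,·) 1-periodic in t, satisfying the coupling conditions η(0) = η₀(0) and v(0,t) = (v₀(0,t), (c(t), 0)) for some smooth 1-periodic c : ℝ → ℝ^{n−k}, and the asymptotic conditions 𝒜^{H₀}(v₀(s,·), η₀(s)) → a as s → −∞ and 𝒜^{H}(v(s,·), η(s)) → b as s → +∞. Then the total energy E := ∫_{−∞}^{0} [∫₀¹ ω_k(∂_s v₀, J₀ ∂_s v₀) dt + (η₀'(s))²] ds + ∫_{0}^{+∞} [∫₀¹ (ω_k ⊕ ω_{n−k})(∂_s v, J ∂_s v) dt + (η'(s))²] ds converges and equals b − a; in particular a ≤ b. -/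

import Mathlib

open Matrix MeasureTheory Filter

attribute [local instance] Matrix.normedAddCommGroup Matrix.normedSpace

/-- The standard complex structure `𝕁_m` on `ℝ^{2m} = ℝ^m × ℝ^m`, as a block matrix
`[[0, I], [−I, 0]]`. -/
noncomputable def Jmat (m : ℕ) : Matrix (Fin m ⊕ Fin m) (Fin m ⊕ Fin m) ℝ :=
  Matrix.fromBlocks 0 1 (-1) 0

/-- The matrix of the symplectic form `ω_k ⊕ ω_{n−k}` on `ℝ^{2k} × ℝ^{2(n−k)}`. -/
noncomputable def Jbig (k l : ℕ) :
    Matrix ((Fin k ⊕ Fin k) ⊕ (Fin l ⊕ Fin l)) ((Fin k ⊕ Fin k) ⊕ (Fin l ⊕ Fin l)) ℝ :=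
  Matrix.fromBlocks (Jmat k) 0 0 (Jmat l)

/-- The block-diagonal matrix `diag(A₀, A₁)` on `ℝ^{2k} × ℝ^{2(n−k)}`, so that
`H(x, y) = ½⟨A₀x, x⟩ + ½⟨A₁y, y⟩ − 1 = ½⟨Abig (x,y), (x,y)⟩ − 1`. -/
noncomputable def Abig (k l : ℕ) (A₀ : Matrix (Fin k ⊕ Fin k) (Fin k ⊕ Fin k) ℝ)
    (A₁ : Matrix (Fin l ⊕ Fin l) (Fin l ⊕ Fin l) ℝ) :
    Matrix ((Fin k ⊕ Fin k) ⊕ (Fin l ⊕ Fin l)) ((Fin k ⊕ Fin k) ⊕ (Fin l ⊕ Fin l)) ℝ :=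
  Matrix.fromBlocks A₀ 0 0 A₁

section helpers

variable {ι : Type*} [Fintype ι]
variable {E : Type*} [NormedAddCommGroup E] [NormedSpace ℝ E]

lemma HasDerivAt.dotProduct_fun {x : ℝ} {f g : ℝ → ι → ℝ} {f' g' : ι → ℝ}
    (hf : HasDerivAt f f' x) (hg : HasDerivAt g g' x) :
    HasDerivAt (fun y => f y ⬝ᵥ g y) (f' ⬝ᵥ g x + f x ⬝ᵥ g') x := by
  simp only [dotProduct]
  have h := HasDerivAt.fun_sum (u := Finset.univ)
    (fun i _ => ((hasDerivAt_pi.1 hf i).mul (hasDerivAt_pi.1 hg i)))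
  simpa [Finset.sum_add_distrib] using h

lemma HasDerivAt.matrix_mulVec {x : ℝ} {f : ℝ → ι → ℝ} {f' : ι → ℝ} (M : Matrix ι ι ℝ)
    (hf : HasDerivAt f f' x) : HasDerivAt (fun y => M *ᵥ f y) (M *ᵥ f') x := by
  rw [hasDerivAt_pi]
  intro i
  simpa [Matrix.mulVec] using (hasDerivAt_const x (M i)).dotProduct_fun hf

lemma ContDiff.dotProduct_fun {n : WithTop ℕ∞} {f g : E → ι → ℝ}
    (hf : ContDiff ℝ n f) (hg : ContDiff ℝ n g) : ContDiff ℝ n fun x => f x ⬝ᵥ g x := by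
  simp only [dotProduct]
  exact ContDiff.sum fun i _ => ((contDiff_pi.1 hf i).mul (contDiff_pi.1 hg i))

lemma ContDiff.matrix_mulVec {n : WithTop ℕ∞} {f : E → ι → ℝ} (M : Matrix ι ι ℝ)
    (hf : ContDiff ℝ n f) : ContDiff ℝ n fun x => M *ᵥ f x := by
  rw [contDiff_pi]
  intro i
  simpa [Matrix.mulVec] using (contDiff_const (c := M i)).dotProduct_fun hf

lemma dot_transpose (M : Matrix ι ι ℝ) (x y : ι → ℝ) : (M *ᵥ x) ⬝ᵥ y = x ⬝ᵥ (Mᵀ *ᵥ y) := by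
  rw [Matrix.dotProduct_mulVec, Matrix.vecMul_transpose]

end helpers

section pderiv

variable {E : Type*} [NormedAddCommGroup E] [NormedSpace ℝ E]

/-- partial derivative in the first variable -/
noncomputable def pd1 (g : ℝ → ℝ → E) : ℝ → ℝ → E :=
  fun s t => fderiv ℝ (fun q : ℝ × ℝ => g q.1 q.2) (s, t) (1, 0)

/-- partial derivative in the second variable -/
noncomputable def pd2 (g : ℝ → ℝ → E) : ℝ → ℝ → E :=
  fun s t => fderiv ℝ (fun q : ℝ × ℝ => g q.1 q.2) (s, t) (0, 1)

lemma hasDerivAt_slice1 {g : ℝ → ℝ → E} (hg : ContDiff ℝ (⊤ : ℕ∞) fun q : ℝ × ℝ => g q.1 q.2)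
    (s t : ℝ) : HasDerivAt (fun s' => g s' t) (pd1 g s t) s := by
  have h1 : HasDerivAt (fun s' : ℝ => ((s', t) : ℝ × ℝ)) ((1, 0) : ℝ × ℝ) s :=
    (hasDerivAt_id s).prodMk (hasDerivAt_const s t)
  exact (((hg.differentiable (by simp)) (s, t)).hasFDerivAt).comp_hasDerivAt s h1

lemma hasDerivAt_slice2 {g : ℝ → ℝ → E} (hg : ContDiff ℝ (⊤ : ℕ∞) fun q : ℝ × ℝ => g q.1 q.2)
    (s t : ℝ) : HasDerivAt (fun t' => g s t') (pd2 g s t) t := by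
  have h1 : HasDerivAt (fun t' : ℝ => ((s, t') : ℝ × ℝ)) ((0, 1) : ℝ × ℝ) t :=
    (hasDerivAt_const t s).prodMk (hasDerivAt_id t)
  exact (((hg.differentiable (by simp)) (s, t)).hasFDerivAt).comp_hasDerivAt t h1

lemma deriv_slice1 {g : ℝ → ℝ → E} (hg : ContDiff ℝ (⊤ : ℕ∞) fun q : ℝ × ℝ => g q.1 q.2)
    (s t : ℝ) : deriv (fun s' => g s' t) s = pd1 g s t :=
  (hasDerivAt_slice1 hg s t).deriv

lemma deriv_slice2 {g : ℝ → ℝ → E} (hg : ContDiff ℝ (⊤ : ℕ∞) fun q : ℝ × ℝ => g q.1 q.2)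
    (s t : ℝ) : deriv (fun t' => g s t') t = pd2 g s t :=
  (hasDerivAt_slice2 hg s t).deriv

lemma contDiff_pd1 {g : ℝ → ℝ → E} (hg : ContDiff ℝ (⊤ : ℕ∞) fun q : ℝ × ℝ => g q.1 q.2) :
    ContDiff ℝ (⊤ : ℕ∞) fun q : ℝ × ℝ => pd1 g q.1 q.2 := by
  have h := hg.fderiv_right (m := (⊤ : ℕ∞)) (by simp)
  exact (ContinuousLinearMap.apply ℝ E ((1, 0) : ℝ × ℝ)).contDiff.comp h

lemma contDiff_pd2 {g : ℝ → ℝ → E} (hg : ContDiff ℝ (⊤ : ℕ∞) fun q : ℝ × ℝ => g q.1 q.2) :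
    ContDiff ℝ (⊤ : ℕ∞) fun q : ℝ × ℝ => pd2 g q.1 q.2 := by
  have h := hg.fderiv_right (m := (⊤ : ℕ∞)) (by simp)
  exact (ContinuousLinearMap.apply ℝ E ((0, 1) : ℝ × ℝ)).contDiff.comp h

lemma clairaut {g : ℝ → ℝ → E} (hg : ContDiff ℝ (⊤ : ℕ∞) fun q : ℝ × ℝ => g q.1 q.2)
    (s t : ℝ) : pd1 (pd2 g) s t = pd2 (pd1 g) s t := by
  set G : ℝ × ℝ → E := fun q => g q.1 q.2 with hG
  have hdiff : Differentiable ℝ G := hg.differentiable (by simp)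
  have hF : ContDiff ℝ (⊤ : ℕ∞) (fderiv ℝ G) := hg.fderiv_right (m := (⊤ : ℕ∞)) (by simp)
  have hF' : HasFDerivAt (fderiv ℝ G) (fderiv ℝ (fderiv ℝ G) (s, t)) (s, t) :=
    ((hF.differentiable (by simp)) (s, t)).hasFDerivAt
  have hsymm := second_derivative_symmetric (f := G) (f' := fderiv ℝ G)
    (f'' := fderiv ℝ (fderiv ℝ G) (s, t)) (fun y => (hdiff y).hasFDerivAt) hF'
  -- identify pd1 (pd2 g) with second derivative applied
  have e1 : pd1 (pd2 g) s t = (fderiv ℝ (fderiv ℝ G) (s, t) (1, 0)) (0, 1) := by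
    have hcomp : HasFDerivAt (fun q : ℝ × ℝ => (fderiv ℝ G q) (0, 1))
        ((ContinuousLinearMap.apply ℝ E ((0, 1) : ℝ × ℝ)).comp
          (fderiv ℝ (fderiv ℝ G) (s, t))) (s, t) :=
      ((ContinuousLinearMap.apply ℝ E ((0, 1) : ℝ × ℝ)).hasFDerivAt).comp (s, t) hF'
    show fderiv ℝ (fun q : ℝ × ℝ => pd2 g q.1 q.2) (s, t) (1, 0) = _
    have : (fun q : ℝ × ℝ => pd2 g q.1 q.2) = fun q : ℝ × ℝ => (fderiv ℝ G q) (0, 1) := rfl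
    rw [this, hcomp.fderiv]
    rfl
  have e2 : pd2 (pd1 g) s t = (fderiv ℝ (fderiv ℝ G) (s, t) (0, 1)) (1, 0) := by
    have hcomp : HasFDerivAt (fun q : ℝ × ℝ => (fderiv ℝ G q) (1, 0))
        ((ContinuousLinearMap.apply ℝ E ((1, 0) : ℝ × ℝ)).comp
          (fderiv ℝ (fderiv ℝ G) (s, t))) (s, t) :=
      ((ContinuousLinearMap.apply ℝ E ((1, 0) : ℝ × ℝ)).hasFDerivAt).comp (s, t) hF'
    show fderiv ℝ (fun q : ℝ × ℝ => pd1 g q.1 q.2) (s, t) (0, 1) = _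
    have : (fun q : ℝ × ℝ => pd1 g q.1 q.2) = fun q : ℝ × ℝ => (fderiv ℝ G q) (1, 0) := rfl
    rw [this, hcomp.fderiv]
    rfl
  rw [e1, e2, hsymm (1, 0) (0, 1)]

end pderiv

open Set in
lemma hasDerivAt_param_integral (f : ℝ → ℝ → ℝ)
    (hf : ContDiff ℝ (⊤ : ℕ∞) fun q : ℝ × ℝ => f q.1 q.2) (s₀ : ℝ) :
    HasDerivAt (fun s => ∫ t in (0:ℝ)..1, f s t)
      (∫ t in (0:ℝ)..1, deriv (fun s => f s t) s₀) s₀ := by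
  have hcont : Continuous fun q : ℝ × ℝ => f q.1 q.2 := hf.continuous
  have hpdc : Continuous fun q : ℝ × ℝ => pd1 f q.1 q.2 := (contDiff_pd1 hf).continuous
  obtain ⟨C, hC⟩ : ∃ C, ∀ q ∈ (Metric.closedBall s₀ 1) ×ˢ (uIcc (0:ℝ) 1),
      ‖pd1 f q.1 q.2‖ ≤ C :=
    ((isCompact_closedBall s₀ 1).prod isCompact_uIcc).exists_bound_of_continuousOn
      hpdc.continuousOn
  have key := intervalIntegral.hasDerivAt_integral_of_dominated_loc_of_deriv_le
    (F := fun s t => f s t) (F' := fun s t => pd1 f s t) (x₀ := s₀) (a := 0) (b := 1)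
    (bound := fun _ => C) (μ := volume) (s := Metric.ball s₀ 1) (Metric.ball_mem_nhds s₀ one_pos)
    (Eventually.of_forall fun x =>
      (hcont.comp (continuous_const.prodMk continuous_id)).aestronglyMeasurable)
    ((hcont.comp (continuous_const.prodMk continuous_id)).intervalIntegrable 0 1)
    (hpdc.comp (continuous_const.prodMk continuous_id)).aestronglyMeasurable
    (Eventually.of_forall fun t ht x hx =>
      hC (x, t) ⟨Metric.ball_subset_closedBall hx, uIoc_subset_uIcc ht⟩)
    (intervalIntegrable_const)
    (Eventually.of_forall fun t _ x _ => hasDerivAt_slice1 hf x t)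
  have h2 := key.2
  have : (∫ t in (0:ℝ)..1, pd1 f s₀ t) = ∫ t in (0:ℝ)..1, deriv (fun s => f s t) s₀ :=
    intervalIntegral.integral_congr fun t _ => (deriv_slice1 hf s₀ t).symm
  rwa [this] at h2
section core

set_option maxHeartbeats 2000000

variable {ι : Type*} [Fintype ι] [DecidableEq ι]

lemma skew_dot (𝕁 : Matrix ι ι ℝ) (h𝕁T : 𝕁ᵀ = -𝕁) (x y : ι → ℝ) :
    (𝕁 *ᵥ x) ⬝ᵥ y = -((𝕁 *ᵥ y) ⬝ᵥ x) := by
  rw [dot_transpose, h𝕁T, Matrix.neg_mulVec, dotProduct_neg, dotProduct_comm]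

lemma core_hasDerivAt
    (𝕁 A : Matrix ι ι ℝ) (h𝕁T : 𝕁ᵀ = -𝕁) (h𝕁𝕁 : 𝕁 * 𝕁 = -1) (hAT : Aᵀ = A)
    (J : (ι → ℝ) → ℝ → ℝ → Matrix ι ι ℝ)
    (hJsq : ∀ x e t, J x e t * J x e t = -1)
    (v : ℝ → ℝ → ι → ℝ) (η : ℝ → ℝ)
    (hv : ContDiff ℝ (⊤ : ℕ∞) fun q : ℝ × ℝ => v q.1 q.2) (hη : ContDiff ℝ (⊤ : ℕ∞) η)
    (hper : ∀ s t, v s (t + 1) = v s t)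
    (s : ℝ)
    (hfl : ∀ t, deriv (fun s' => v s' t) s =
        -(J (v s t) (η s) t).mulVec
          (deriv (fun t' => v s t') t - η s • 𝕁.mulVec (A.mulVec (v s t))))
    (hflη : deriv η s = -∫ t in (0:ℝ)..1, ((1:ℝ)/2 * (A.mulVec (v s t) ⬝ᵥ v s t) - 1)) :
    HasDerivAt (fun s' =>
        (∫ t in (0:ℝ)..1, (1:ℝ)/2 * (𝕁.mulVec (v s' t) ⬝ᵥ deriv (fun t' => v s' t') t))
        - η s' * ∫ t in (0:ℝ)..1, ((1:ℝ)/2 * (A.mulVec (v s' t) ⬝ᵥ v s' t) - 1))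
      ((∫ t in (0:ℝ)..1, 𝕁.mulVec (deriv (fun s' => v s' t) s) ⬝ᵥ
          (J (v s t) (η s) t).mulVec (deriv (fun s' => v s' t) s)) + (deriv η s) ^ 2) s := by
  -- joint smoothness of the partial derivatives
  have hp1 : ContDiff ℝ (⊤ : ℕ∞) fun q : ℝ × ℝ => pd1 v q.1 q.2 := contDiff_pd1 hv
  have hp2 : ContDiff ℝ (⊤ : ℕ∞) fun q : ℝ × ℝ => pd2 v q.1 q.2 := contDiff_pd2 hv
  have hp12 : ContDiff ℝ (⊤ : ℕ∞) fun q : ℝ × ℝ => pd1 (pd2 v) q.1 q.2 := contDiff_pd1 hp2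
  have hp21 : ContDiff ℝ (⊤ : ℕ∞) fun q : ℝ × ℝ => pd2 (pd1 v) q.1 q.2 := contDiff_pd2 hp1
  have sl : ContDiff ℝ (⊤ : ℕ∞) fun t : ℝ => ((s, t) : ℝ × ℝ) := contDiff_const.prodMk contDiff_id
  -- rewrite the t-derivatives in the statement
  have dv2 : ∀ s' t, deriv (fun t' => v s' t') t = pd2 v s' t := fun s' t => deriv_slice2 hv s' t
  have dv1 : ∀ s' t, deriv (fun s'' => v s'' t) s' = pd1 v s' t := fun s' t => deriv_slice1 hv s' t
  simp only [dv1, dv2]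
  -- the two parametric integrands
  have hf₁ : ContDiff ℝ (⊤ : ℕ∞) fun q : ℝ × ℝ =>
      (1:ℝ)/2 * (𝕁 *ᵥ v q.1 q.2 ⬝ᵥ pd2 v q.1 q.2) :=
    contDiff_const.mul ((hv.matrix_mulVec 𝕁).dotProduct_fun hp2)
  have hf₂ : ContDiff ℝ (⊤ : ℕ∞) fun q : ℝ × ℝ =>
      ((1:ℝ)/2 * (A *ᵥ v q.1 q.2 ⬝ᵥ v q.1 q.2) - 1) :=
    (contDiff_const.mul ((hv.matrix_mulVec A).dotProduct_fun hv)).sub contDiff_const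
  -- pointwise s-derivatives of the integrands
  have hd1 : ∀ t, HasDerivAt (fun s' => (1:ℝ)/2 * (𝕁 *ᵥ v s' t ⬝ᵥ pd2 v s' t))
      ((1:ℝ)/2 * ((𝕁 *ᵥ pd1 v s t) ⬝ᵥ pd2 v s t) +
        (1:ℝ)/2 * ((𝕁 *ᵥ v s t) ⬝ᵥ pd1 (pd2 v) s t)) s := by
    intro t
    have h1 : HasDerivAt (fun s' => v s' t) (pd1 v s t) s := hasDerivAt_slice1 hv s t
    have h2 : HasDerivAt (fun s' => pd2 v s' t) (pd1 (pd2 v) s t) s := hasDerivAt_slice1 hp2 s t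
    have h3 := HasDerivAt.const_mul ((1:ℝ)/2) ((h1.matrix_mulVec 𝕁).dotProduct_fun h2)
    refine h3.congr_deriv ?_
    ring
  have hd2 : ∀ t, HasDerivAt (fun s' => ((1:ℝ)/2 * (A *ᵥ v s' t ⬝ᵥ v s' t) - 1))
      ((A *ᵥ v s t) ⬝ᵥ pd1 v s t) s := by
    intro t
    have h1 : HasDerivAt (fun s' => v s' t) (pd1 v s t) s := hasDerivAt_slice1 hv s t
    have h3 := (HasDerivAt.const_mul ((1:ℝ)/2)
      ((h1.matrix_mulVec A).dotProduct_fun h1)).sub_const 1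
    refine h3.congr_deriv ?_
    have e : (A *ᵥ pd1 v s t) ⬝ᵥ v s t = (A *ᵥ v s t) ⬝ᵥ pd1 v s t := by
      rw [dot_transpose, hAT]
      exact dotProduct_comm _ _
    rw [e]
    ring
  -- derivative of the symplectic-action part
  have hP : HasDerivAt (fun s' => ∫ t in (0:ℝ)..1, (1:ℝ)/2 * (𝕁 *ᵥ v s' t ⬝ᵥ pd2 v s' t))
      (∫ t in (0:ℝ)..1, ((1:ℝ)/2 * ((𝕁 *ᵥ pd1 v s t) ⬝ᵥ pd2 v s t) +
        (1:ℝ)/2 * ((𝕁 *ᵥ v s t) ⬝ᵥ pd1 (pd2 v) s t))) s := by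
    have h := hasDerivAt_param_integral (fun s' t => (1:ℝ)/2 * (𝕁 *ᵥ v s' t ⬝ᵥ pd2 v s' t)) hf₁ s
    rwa [intervalIntegral.integral_congr (fun t _ => (hd1 t).deriv)] at h
  have hQ : HasDerivAt (fun s' => ∫ t in (0:ℝ)..1, ((1:ℝ)/2 * (A *ᵥ v s' t ⬝ᵥ v s' t) - 1))
      (∫ t in (0:ℝ)..1, (A *ᵥ v s t) ⬝ᵥ pd1 v s t) s := by
    have h := hasDerivAt_param_integral (fun s' t => ((1:ℝ)/2 * (A *ᵥ v s' t ⬝ᵥ v s' t) - 1)) hf₂ s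
    rwa [intervalIntegral.integral_congr (fun t _ => (hd2 t).deriv)] at h
  -- integration by parts in t
  have hφ : ∀ t, HasDerivAt (fun t' => (1:ℝ)/2 * ((𝕁 *ᵥ v s t') ⬝ᵥ pd1 v s t'))
      ((1:ℝ)/2 * ((𝕁 *ᵥ pd2 v s t) ⬝ᵥ pd1 v s t) +
        (1:ℝ)/2 * ((𝕁 *ᵥ v s t) ⬝ᵥ pd1 (pd2 v) s t)) t := by
    intro t
    have h1 : HasDerivAt (fun t' => v s t') (pd2 v s t) t := hasDerivAt_slice2 hv s t
    have h2 : HasDerivAt (fun t' => pd1 v s t') (pd2 (pd1 v) s t) t := hasDerivAt_slice2 hp1 s t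
    rw [← clairaut hv s t] at h2
    have h3 := HasDerivAt.const_mul ((1:ℝ)/2) ((h1.matrix_mulVec 𝕁).dotProduct_fun h2)
    refine h3.congr_deriv ?_
    ring
  -- continuity of all t-integrands
  have cInt : ∀ (f : ℝ × ℝ → ℝ), ContDiff ℝ (⊤ : ℕ∞) f →
      IntervalIntegrable (fun t => f (s, t)) MeasureTheory.volume 0 1 := fun f hf =>
    (hf.continuous.comp sl.continuous).intervalIntegrable 0 1
  have hcb : IntervalIntegrable (fun t => (1:ℝ)/2 * ((𝕁 *ᵥ pd2 v s t) ⬝ᵥ pd1 v s t) +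
      (1:ℝ)/2 * ((𝕁 *ᵥ v s t) ⬝ᵥ pd1 (pd2 v) s t)) MeasureTheory.volume 0 1 :=
    cInt (fun q : ℝ × ℝ => (1:ℝ)/2 * ((𝕁 *ᵥ pd2 v q.1 q.2) ⬝ᵥ pd1 v q.1 q.2) +
        (1:ℝ)/2 * ((𝕁 *ᵥ v q.1 q.2) ⬝ᵥ pd1 (pd2 v) q.1 q.2))
      ((contDiff_const.mul ((hp2.matrix_mulVec 𝕁).dotProduct_fun hp1)).add
        (contDiff_const.mul ((hv.matrix_mulVec 𝕁).dotProduct_fun hp12)))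
  have hab : IntervalIntegrable (fun t => (1:ℝ)/2 * ((𝕁 *ᵥ pd1 v s t) ⬝ᵥ pd2 v s t) +
      (1:ℝ)/2 * ((𝕁 *ᵥ v s t) ⬝ᵥ pd1 (pd2 v) s t)) MeasureTheory.volume 0 1 :=
    cInt (fun q : ℝ × ℝ => (1:ℝ)/2 * ((𝕁 *ᵥ pd1 v q.1 q.2) ⬝ᵥ pd2 v q.1 q.2) +
        (1:ℝ)/2 * ((𝕁 *ᵥ v q.1 q.2) ⬝ᵥ pd1 (pd2 v) q.1 q.2))
      ((contDiff_const.mul ((hp1.matrix_mulVec 𝕁).dotProduct_fun hp2)).add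
        (contDiff_const.mul ((hv.matrix_mulVec 𝕁).dotProduct_fun hp12)))
  -- the boundary term vanishes by periodicity
  have hv10 : v s 1 = v s 0 := by simpa using hper s 0
  have hVs10 : pd1 v s 1 = pd1 v s 0 := by
    have h0 : (fun s' => v s' 1) = fun s' => v s' 0 := funext fun s' => by simpa using hper s' 0
    rw [← deriv_slice1 hv s 1, ← deriv_slice1 hv s 0, h0]
  have hparts : (∫ t in (0:ℝ)..1, ((1:ℝ)/2 * ((𝕁 *ᵥ pd2 v s t) ⬝ᵥ pd1 v s t) +
      (1:ℝ)/2 * ((𝕁 *ᵥ v s t) ⬝ᵥ pd1 (pd2 v) s t))) = 0 := by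
    rw [intervalIntegral.integral_eq_sub_of_hasDerivAt (fun t _ => hφ t) hcb, hv10, hVs10,
      sub_self]
  -- hence the parts formula: ∫ b = -∫ c
  have hPval : (∫ t in (0:ℝ)..1, ((1:ℝ)/2 * ((𝕁 *ᵥ pd1 v s t) ⬝ᵥ pd2 v s t) +
      (1:ℝ)/2 * ((𝕁 *ᵥ v s t) ⬝ᵥ pd1 (pd2 v) s t)))
      = ∫ t in (0:ℝ)..1, (𝕁 *ᵥ pd1 v s t) ⬝ᵥ pd2 v s t := by
    have hsub := intervalIntegral.integral_sub hab hcb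
    have e : (fun t => ((1:ℝ)/2 * ((𝕁 *ᵥ pd1 v s t) ⬝ᵥ pd2 v s t) +
          (1:ℝ)/2 * ((𝕁 *ᵥ v s t) ⬝ᵥ pd1 (pd2 v) s t)) -
        ((1:ℝ)/2 * ((𝕁 *ᵥ pd2 v s t) ⬝ᵥ pd1 v s t) +
          (1:ℝ)/2 * ((𝕁 *ᵥ v s t) ⬝ᵥ pd1 (pd2 v) s t)))
        = fun t => (𝕁 *ᵥ pd1 v s t) ⬝ᵥ pd2 v s t := by
      funext t
      rw [skew_dot 𝕁 h𝕁T (pd2 v s t) (pd1 v s t)]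
      ring
    rw [e] at hsub
    have := hsub.symm
    rw [hparts, sub_zero] at this
    linarith [this]
  -- full derivative
  have hηd : HasDerivAt η (deriv η s) s := (hη.differentiable (by simp) s).hasDerivAt
  have hQs : (∫ t in (0:ℝ)..1, ((1:ℝ)/2 * (A *ᵥ v s t ⬝ᵥ v s t) - 1)) = -deriv η s := by
    rw [hflη, neg_neg]
  -- pointwise identity via the Floer equation
  have hpt : ∀ t, (𝕁 *ᵥ pd1 v s t) ⬝ᵥ ((J (v s t) (η s) t) *ᵥ pd1 v s t)
      = (𝕁 *ᵥ pd1 v s t) ⬝ᵥ pd2 v s t - η s * ((A *ᵥ v s t) ⬝ᵥ pd1 v s t) := by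
    intro t
    have hu : (J (v s t) (η s) t) *ᵥ pd1 v s t
        = pd2 v s t - η s • (𝕁 *ᵥ (A *ᵥ v s t)) := by
      have h := hfl t
      rw [dv1, dv2] at h
      rw [h, Matrix.mulVec_neg, Matrix.mulVec_mulVec, hJsq, Matrix.neg_mulVec,
        Matrix.one_mulVec, neg_neg]
    have e2 : (𝕁 *ᵥ pd1 v s t) ⬝ᵥ (𝕁 *ᵥ (A *ᵥ v s t)) = (A *ᵥ v s t) ⬝ᵥ pd1 v s t := by
      rw [dot_transpose, Matrix.mulVec_mulVec, h𝕁T, Matrix.neg_mul, h𝕁𝕁, neg_neg,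
        Matrix.one_mulVec]
      exact dotProduct_comm _ _
    rw [hu, dotProduct_sub, dotProduct_smul, e2, smul_eq_mul]
  have hint1 : IntervalIntegrable (fun t => (𝕁 *ᵥ pd1 v s t) ⬝ᵥ pd2 v s t)
      MeasureTheory.volume 0 1 :=
    cInt (fun q : ℝ × ℝ => (𝕁 *ᵥ pd1 v q.1 q.2) ⬝ᵥ pd2 v q.1 q.2)
      ((hp1.matrix_mulVec 𝕁).dotProduct_fun hp2)
  have hint2 : IntervalIntegrable (fun t => η s * ((A *ᵥ v s t) ⬝ᵥ pd1 v s t))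
      MeasureTheory.volume 0 1 :=
    cInt (fun q : ℝ × ℝ => η s * ((A *ᵥ v q.1 q.2) ⬝ᵥ pd1 v q.1 q.2))
      (contDiff_const.mul ((hv.matrix_mulVec A).dotProduct_fun hp1))
  have hmain : (∫ t in (0:ℝ)..1, (𝕁 *ᵥ pd1 v s t) ⬝ᵥ ((J (v s t) (η s) t) *ᵥ pd1 v s t))
      = (∫ t in (0:ℝ)..1, (𝕁 *ᵥ pd1 v s t) ⬝ᵥ pd2 v s t)
        - η s * ∫ t in (0:ℝ)..1, (A *ᵥ v s t) ⬝ᵥ pd1 v s t := by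
    rw [← intervalIntegral.integral_const_mul, ← intervalIntegral.integral_sub hint1 hint2]
    exact intervalIntegral.integral_congr fun t _ => hpt t
  have hgoal : (∫ t in (0:ℝ)..1, (𝕁 *ᵥ pd1 v s t) ⬝ᵥ ((J (v s t) (η s) t) *ᵥ pd1 v s t))
        + (deriv η s) ^ 2
      = (∫ t in (0:ℝ)..1, ((1:ℝ)/2 * ((𝕁 *ᵥ pd1 v s t) ⬝ᵥ pd2 v s t) +
          (1:ℝ)/2 * ((𝕁 *ᵥ v s t) ⬝ᵥ pd1 (pd2 v) s t)))
        - (deriv η s * (∫ t in (0:ℝ)..1, ((1:ℝ)/2 * (A *ᵥ v s t ⬝ᵥ v s t) - 1))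
           + η s * ∫ t in (0:ℝ)..1, (A *ᵥ v s t) ⬝ᵥ pd1 v s t) := by
    rw [hPval, hQs, hmain]; ring
  rw [hgoal]
  exact hP.sub (hηd.mul hQ)
end core

lemma Jmat_transpose (m : ℕ) : (Jmat m)ᵀ = -(Jmat m) := by
  simp [Jmat, Matrix.fromBlocks_transpose, Matrix.fromBlocks_neg]

lemma Jmat_sq (m : ℕ) : Jmat m * Jmat m = -1 := by
  rw [Jmat, Matrix.fromBlocks_multiply, ← Matrix.fromBlocks_one (l := Fin m) (m := Fin m) (α := ℝ),
    Matrix.fromBlocks_neg]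
  norm_num

lemma Jbig_transpose (k l : ℕ) : (Jbig k l)ᵀ = -(Jbig k l) := by
  simp [Jbig, Matrix.fromBlocks_transpose, Matrix.fromBlocks_neg, Jmat_transpose]

lemma Jbig_sq (k l : ℕ) : Jbig k l * Jbig k l = -1 := by
  rw [Jbig, Matrix.fromBlocks_multiply,
    ← Matrix.fromBlocks_one (l := Fin k ⊕ Fin k) (m := Fin l ⊕ Fin l) (α := ℝ),
    Matrix.fromBlocks_neg]
  simp [Jmat_sq]

lemma Abig_transpose (k l : ℕ) (A₀ : Matrix (Fin k ⊕ Fin k) (Fin k ⊕ Fin k) ℝ)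
    (A₁ : Matrix (Fin l ⊕ Fin l) (Fin l ⊕ Fin l) ℝ) (h₀ : A₀ᵀ = A₀) (h₁ : A₁ᵀ = A₁) :
    (Abig k l A₀ A₁)ᵀ = Abig k l A₀ A₁ := by
  simp [Abig, Matrix.fromBlocks_transpose, h₀, h₁]

/-- Energy identity for the hybrid problem: if `(v₀, η₀)` (for `s ≤ 0`) and
`(v, η)` (for `s ≥ 0`) solve the Rabinowitz Floer equations of `H₀` and `H = H₀ + H₁`
respectively, are coupled at `s = 0` by `η(0) = η₀(0)` and
`v(0,t) = (v₀(0,t), (c(t), 0))`, and the actions converge to `a` as `s → −∞` and to `b` as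
`s → +∞`, then the total energy converges and equals `b − a`; in particular `a ≤ b`. -/
theorem stmt_16 (n k : ℕ) (hk : 1 ≤ k) (hkn : k ≤ n - 1)
    (A₀ : Matrix (Fin k ⊕ Fin k) (Fin k ⊕ Fin k) ℝ) (hA₀ : A₀.PosDef)
    (A₁ : Matrix (Fin (n - k) ⊕ Fin (n - k)) (Fin (n - k) ⊕ Fin (n - k)) ℝ)
    (hA₁sym : A₁ᵀ = A₁) (hA₁inv : IsUnit A₁)
    (hzero : ∀ c : Fin (n - k) → ℝ, A₁.mulVec (Sum.elim c 0) ⬝ᵥ (Sum.elim c 0) = 0)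
    -- the almost complex structures
    (J₀ : ((Fin k ⊕ Fin k) → ℝ) → ℝ → ℝ → Matrix (Fin k ⊕ Fin k) (Fin k ⊕ Fin k) ℝ)
    (J : (((Fin k ⊕ Fin k) ⊕ (Fin (n - k) ⊕ Fin (n - k))) → ℝ) → ℝ → ℝ →
      Matrix ((Fin k ⊕ Fin k) ⊕ (Fin (n - k) ⊕ Fin (n - k)))
        ((Fin k ⊕ Fin k) ⊕ (Fin (n - k) ⊕ Fin (n - k))) ℝ)
    (hJ₀smooth : ContDiff ℝ (⊤ : ℕ∞) (fun q : (((Fin k ⊕ Fin k) → ℝ) × ℝ) × ℝ => J₀ q.1.1 q.1.2 q.2))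
    (hJsmooth : ContDiff ℝ (⊤ : ℕ∞)
      (fun q : (((((Fin k ⊕ Fin k) ⊕ (Fin (n - k) ⊕ Fin (n - k))) → ℝ)) × ℝ) × ℝ =>
        J q.1.1 q.1.2 q.2))
    (hJ₀per : ∀ x e t, J₀ x e (t + 1) = J₀ x e t)
    (hJper : ∀ x e t, J x e (t + 1) = J x e t)
    (hJ₀sq : ∀ x e t, J₀ x e t * J₀ x e t = -1)
    (hJsq : ∀ x e t, J x e t * J x e t = -1)
    (hJ₀comp : ∀ x e t (ξ : (Fin k ⊕ Fin k) → ℝ), ξ ≠ 0 →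
      0 < (Jmat k).mulVec ξ ⬝ᵥ (J₀ x e t).mulVec ξ)
    (hJcomp : ∀ x e t (ξ : ((Fin k ⊕ Fin k) ⊕ (Fin (n - k) ⊕ Fin (n - k))) → ℝ), ξ ≠ 0 →
      0 < (Jbig k (n - k)).mulVec ξ ⬝ᵥ (J x e t).mulVec ξ)
    -- the two half trajectories
    (v₀ : ℝ → ℝ → (Fin k ⊕ Fin k) → ℝ) (η₀ : ℝ → ℝ)
    (v : ℝ → ℝ → ((Fin k ⊕ Fin k) ⊕ (Fin (n - k) ⊕ Fin (n - k))) → ℝ) (η : ℝ → ℝ)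
    (hv₀ : ContDiff ℝ (⊤ : ℕ∞) (fun q : ℝ × ℝ => v₀ q.1 q.2)) (hη₀ : ContDiff ℝ (⊤ : ℕ∞) η₀)
    (hv : ContDiff ℝ (⊤ : ℕ∞) (fun q : ℝ × ℝ => v q.1 q.2)) (hη : ContDiff ℝ (⊤ : ℕ∞) η)
    (hv₀per : ∀ s t, v₀ s (t + 1) = v₀ s t)
    (hvper : ∀ s t, v s (t + 1) = v s t)
    -- the Rabinowitz Floer equations for `(v₀, η₀)` on `s ≤ 0`
    (hfloer₀ : ∀ s ≤ (0:ℝ), ∀ t, deriv (fun s' => v₀ s' t) s =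
      -(J₀ (v₀ s t) (η₀ s) t).mulVec
        (deriv (fun t' => v₀ s t') t - η₀ s • (Jmat k).mulVec (A₀.mulVec (v₀ s t))))
    (hfloerη₀ : ∀ s ≤ (0:ℝ), deriv η₀ s =
      -∫ t in (0:ℝ)..1, ((1 / 2) * (A₀.mulVec (v₀ s t) ⬝ᵥ v₀ s t) - 1))
    -- the Rabinowitz Floer equations for `(v, η)` on `s ≥ 0`
    (hfloer : ∀ s, (0:ℝ) ≤ s → ∀ t, deriv (fun s' => v s' t) s =
      -(J (v s t) (η s) t).mulVec
        (deriv (fun t' => v s t') t -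
          η s • (Jbig k (n - k)).mulVec ((Abig k (n - k) A₀ A₁).mulVec (v s t))))
    (hfloerη : ∀ s, (0:ℝ) ≤ s → deriv η s =
      -∫ t in (0:ℝ)..1,
        ((1 / 2) * ((Abig k (n - k) A₀ A₁).mulVec (v s t) ⬝ᵥ v s t) - 1))
    -- the coupling conditions at `s = 0`
    (hcouple₁ : η 0 = η₀ 0)
    (c : ℝ → Fin (n - k) → ℝ) (hc : ContDiff ℝ (⊤ : ℕ∞) c) (hcper : ∀ t, c (t + 1) = c t)
    (hcouple₂ : ∀ t, v 0 t = Sum.elim (v₀ 0 t) (Sum.elim (c t) 0))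
    -- the asymptotic conditions on the actions
    (a b : ℝ)
    (ha : Tendsto (fun s =>
        (∫ t in (0:ℝ)..1,
          (1 / 2) * ((Jmat k).mulVec (v₀ s t) ⬝ᵥ deriv (fun t' => v₀ s t') t))
        - η₀ s * ∫ t in (0:ℝ)..1, ((1 / 2) * (A₀.mulVec (v₀ s t) ⬝ᵥ v₀ s t) - 1))
      atBot (nhds a))
    (hb : Tendsto (fun s =>
        (∫ t in (0:ℝ)..1,
          (1 / 2) * ((Jbig k (n - k)).mulVec (v s t) ⬝ᵥ deriv (fun t' => v s t') t))
        - η s * ∫ t in (0:ℝ)..1,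
            ((1 / 2) * ((Abig k (n - k) A₀ A₁).mulVec (v s t) ⬝ᵥ v s t) - 1))
      atTop (nhds b)) :
    -- conclusion: the energy converges and equals `b − a`, and `a ≤ b`
    IntegrableOn (fun s =>
        (∫ t in (0:ℝ)..1, (Jmat k).mulVec (deriv (fun s' => v₀ s' t) s) ⬝ᵥ
          (J₀ (v₀ s t) (η₀ s) t).mulVec (deriv (fun s' => v₀ s' t) s))
        + (deriv η₀ s) ^ 2) (Set.Iic 0) ∧
    IntegrableOn (fun s =>
        (∫ t in (0:ℝ)..1, (Jbig k (n - k)).mulVec (deriv (fun s' => v s' t) s) ⬝ᵥ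
          (J (v s t) (η s) t).mulVec (deriv (fun s' => v s' t) s))
        + (deriv η s) ^ 2) (Set.Ici 0) ∧
    (∫ s in Set.Iic (0:ℝ),
        ((∫ t in (0:ℝ)..1, (Jmat k).mulVec (deriv (fun s' => v₀ s' t) s) ⬝ᵥ
          (J₀ (v₀ s t) (η₀ s) t).mulVec (deriv (fun s' => v₀ s' t) s))
        + (deriv η₀ s) ^ 2))
      + (∫ s in Set.Ici (0:ℝ),
        ((∫ t in (0:ℝ)..1, (Jbig k (n - k)).mulVec (deriv (fun s' => v s' t) s) ⬝ᵥ
          (J (v s t) (η s) t).mulVec (deriv (fun s' => v s' t) s))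
        + (deriv η s) ^ 2)) = b - a ∧
    a ≤ b := by
  classical
  have hA₀T : A₀ᵀ = A₀ := by
    rw [← Matrix.conjTranspose_eq_transpose_of_trivial]; exact hA₀.1
  have hAbT : (Abig k (n - k) A₀ A₁)ᵀ = Abig k (n - k) A₀ A₁ :=
    Abig_transpose _ _ _ _ hA₀T hA₁sym
  -- the action functionals
  set F₀ : ℝ → ℝ := fun s =>
      (∫ t in (0:ℝ)..1,
        (1 / 2) * ((Jmat k).mulVec (v₀ s t) ⬝ᵥ deriv (fun t' => v₀ s t') t))
      - η₀ s * ∫ t in (0:ℝ)..1, ((1 / 2) * (A₀.mulVec (v₀ s t) ⬝ᵥ v₀ s t) - 1) with hF₀def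
  set Fb : ℝ → ℝ := fun s =>
      (∫ t in (0:ℝ)..1,
        (1 / 2) * ((Jbig k (n - k)).mulVec (v s t) ⬝ᵥ deriv (fun t' => v s t') t))
      - η s * ∫ t in (0:ℝ)..1,
          ((1 / 2) * ((Abig k (n - k) A₀ A₁).mulVec (v s t) ⬝ᵥ v s t) - 1) with hFbdef
  -- the energy densities
  set E₀ : ℝ → ℝ := fun s =>
      (∫ t in (0:ℝ)..1, (Jmat k).mulVec (deriv (fun s' => v₀ s' t) s) ⬝ᵥ
        (J₀ (v₀ s t) (η₀ s) t).mulVec (deriv (fun s' => v₀ s' t) s))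
      + (deriv η₀ s) ^ 2 with hE₀def
  set E : ℝ → ℝ := fun s =>
      (∫ t in (0:ℝ)..1, (Jbig k (n - k)).mulVec (deriv (fun s' => v s' t) s) ⬝ᵥ
        (J (v s t) (η s) t).mulVec (deriv (fun s' => v s' t) s))
      + (deriv η s) ^ 2 with hEdef
  -- derivatives of the actions
  have hDer₀ : ∀ s ∈ Set.Iic (0:ℝ), HasDerivAt F₀ (E₀ s) s := fun s hs =>
    core_hasDerivAt (Jmat k) A₀ (Jmat_transpose k) (Jmat_sq k) hA₀T J₀ hJ₀sq v₀ η₀ hv₀ hη₀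
      hv₀per s (hfloer₀ s hs) (hfloerη₀ s hs)
  have hDer : ∀ s ∈ Set.Ici (0:ℝ), HasDerivAt Fb (E s) s := fun s hs =>
    core_hasDerivAt (Jbig k (n - k)) (Abig k (n - k) A₀ A₁) (Jbig_transpose k (n - k))
      (Jbig_sq k (n - k)) hAbT J hJsq v η hv hη hvper s (hfloer s hs) (hfloerη s hs)
  -- nonnegativity of the energy densities
  have hE₀nn : ∀ s, 0 ≤ E₀ s := by
    intro s
    have h1 : 0 ≤ ∫ t in (0:ℝ)..1, (Jmat k).mulVec (deriv (fun s' => v₀ s' t) s) ⬝ᵥ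
        (J₀ (v₀ s t) (η₀ s) t).mulVec (deriv (fun s' => v₀ s' t) s) := by
      apply intervalIntegral.integral_nonneg zero_le_one
      intro u _
      by_cases hξ : deriv (fun s' => v₀ s' u) s = 0
      · rw [hξ]; simp
      · exact (hJ₀comp _ _ _ _ hξ).le
    exact add_nonneg h1 (sq_nonneg _)
  have hEnn : ∀ s, 0 ≤ E s := by
    intro s
    have h1 : 0 ≤ ∫ t in (0:ℝ)..1, (Jbig k (n - k)).mulVec (deriv (fun s' => v s' t) s) ⬝ᵥ
        (J (v s t) (η s) t).mulVec (deriv (fun s' => v s' t) s) := by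
      apply intervalIntegral.integral_nonneg zero_le_one
      intro u _
      by_cases hξ : deriv (fun s' => v s' u) s = 0
      · rw [hξ]; simp
      · exact (hJcomp _ _ _ _ hξ).le
    exact add_nonneg h1 (sq_nonneg _)
  -- right half-line
  have hIntR : IntegrableOn E (Set.Ioi 0) :=
    integrableOn_Ioi_deriv_of_nonneg' hDer (fun x _ => hEnn x) hb
  have hValR : (∫ s in Set.Ioi (0:ℝ), E s) = b - Fb 0 :=
    integral_Ioi_of_hasDerivAt_of_nonneg' hDer (fun x _ => hEnn x) hb
  -- left half-line, via reflection
  have hgneg : ∀ u ∈ Set.Ici (0:ℝ), HasDerivAt (fun u => -F₀ (-u)) (E₀ (-u)) u := by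
    intro u hu
    have h1 : HasDerivAt F₀ (E₀ (-u)) (-u) := hDer₀ _ (by simpa using hu)
    have h2 : HasDerivAt (fun u : ℝ => -u) (-1) u := hasDerivAt_neg u
    have h3 := (h1.comp u h2).neg
    refine h3.congr_deriv ?_
    ring
  have hFa' : Tendsto (fun u => -F₀ (-u)) atTop (nhds (-a)) :=
    (ha.comp tendsto_neg_atTop_atBot).neg
  have hIntL' : IntegrableOn (fun u => E₀ (-u)) (Set.Ioi 0) :=
    integrableOn_Ioi_deriv_of_nonneg' hgneg (fun x _ => hE₀nn _) hFa'
  have hValL' : (∫ u in Set.Ioi (0:ℝ), E₀ (-u)) = -a - -F₀ (-0) :=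
    integral_Ioi_of_hasDerivAt_of_nonneg' hgneg (fun x _ => hE₀nn _) hFa'
  have hIntL : IntegrableOn E₀ (Set.Iic (0:ℝ)) := by
    have hIci : IntegrableOn (fun u => E₀ (-u)) (Set.Ici 0) :=
      Iff.mpr integrableOn_Ici_iff_integrableOn_Ioi hIntL'
    have hpre : ((fun x : ℝ => -x) ⁻¹' Set.Iic 0) = Set.Ici 0 := by
      ext x; simp
    have hiff := MeasurePreserving.integrableOn_comp_preimage
      (Measure.measurePreserving_neg (volume : Measure ℝ))
      (Homeomorph.neg ℝ).measurableEmbedding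
      (f := E₀) (s := Set.Iic (0:ℝ))
    rw [hpre] at hiff
    exact hiff.mp hIci
  have hValL : (∫ s in Set.Iic (0:ℝ), E₀ s) = F₀ 0 - a := by
    have h := integral_comp_neg_Ioi (0:ℝ) E₀
    rw [neg_zero] at h
    rw [← h, hValL']
    rw [neg_zero]
    ring
  -- coupling at s = 0
  have hdvt : ∀ t, deriv (fun t' => v 0 t') t
      = Sum.elim (deriv (fun t' => v₀ 0 t') t) (Sum.elim (deriv c t) (0 : Fin (n - k) → ℝ)) := by
    intro t
    have hfun : (fun t' => v 0 t') = fun t' => Sum.elim (v₀ 0 t') (Sum.elim (c t') 0) :=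
      funext fun t' => hcouple₂ t'
    have h₀ : HasDerivAt (fun t' => v₀ 0 t') (deriv (fun t' => v₀ 0 t') t) t := by
      have h := hasDerivAt_slice2 hv₀ 0 t
      rwa [← deriv_slice2 hv₀ 0 t] at h
    have hc' : HasDerivAt c (deriv c t) t := (hc.differentiable (by simp) t).hasDerivAt
    have hbig : HasDerivAt (fun t' => Sum.elim (v₀ 0 t') (Sum.elim (c t') 0))
        (Sum.elim (deriv (fun t' => v₀ 0 t') t) (Sum.elim (deriv c t) (0 : Fin (n - k) → ℝ))) t := by
      rw [hasDerivAt_pi]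
      rintro (i | j)
      · simpa using hasDerivAt_pi.1 h₀ i
      · rcases j with j | j
        · simpa using hasDerivAt_pi.1 hc' j
        · simpa using hasDerivAt_const t (0:ℝ)
    rw [hfun, hbig.deriv]
  have hsymp0 : ∀ t, (1:ℝ) / 2 * ((Jbig k (n - k)).mulVec (v 0 t) ⬝ᵥ deriv (fun t' => v 0 t') t)
      = (1:ℝ) / 2 * ((Jmat k).mulVec (v₀ 0 t) ⬝ᵥ deriv (fun t' => v₀ 0 t') t) := by
    intro t
    rw [hdvt t, hcouple₂ t]
    simp [Jbig, Jmat, Matrix.fromBlocks_mulVec, sumElim_dotProduct_sumElim,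
      Matrix.neg_mulVec]
  have hH0 : ∀ t, ((1:ℝ) / 2 * ((Abig k (n - k) A₀ A₁).mulVec (v 0 t) ⬝ᵥ v 0 t) - 1)
      = ((1:ℝ) / 2 * (A₀.mulVec (v₀ 0 t) ⬝ᵥ v₀ 0 t) - 1) := by
    intro t
    rw [hcouple₂ t]
    simp [Abig, Matrix.fromBlocks_mulVec, sumElim_dotProduct_sumElim, hzero (c t)]
  have hF0eq : Fb 0 = F₀ 0 := by
    rw [hFbdef, hF₀def]
    simp only []
    rw [hcouple₁, intervalIntegral.integral_congr (fun t _ => hsymp0 t),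
      intervalIntegral.integral_congr (fun t _ => hH0 t)]
  -- assembling
  have hIntRIci : IntegrableOn E (Set.Ici (0:ℝ)) :=
    Iff.mpr integrableOn_Ici_iff_integrableOn_Ioi hIntR
  have hValRIci : (∫ s in Set.Ici (0:ℝ), E s) = b - Fb 0 := by
    rw [integral_Ici_eq_integral_Ioi, hValR]
  have hL0 : 0 ≤ ∫ s in Set.Iic (0:ℝ), E₀ s :=
    setIntegral_nonneg measurableSet_Iic fun x _ => hE₀nn x
  have hR0 : 0 ≤ ∫ s in Set.Ici (0:ℝ), E s :=
    setIntegral_nonneg measurableSet_Ici fun x _ => hEnn x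
  refine ⟨hIntL, hIntRIci, ?_, ?_⟩
  · rw [hValL, hValRIci, hF0eq]; ring
  · nlinarith [hValL, hValRIci, hF0eq, hL0, hR0]
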